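/- Second-derivative comparison between the continuous interpolant and the discrete second difference: let m = 2R+1 be odd, h = L/m, and let φ be the complex grid function determined by coefficients c : {−R,…,R}³ → ℂ via φ_{i,j,k} = Σ_{r,s,t=−R}^{R} c_{r,s,t} e^{2πi(r x_i + s y_j + t z_k)/L}. Then L³ Σ_{r,s,t=−R}^{R} (2π r / L)⁴ |c_{r,s,t}|² ≤ (π/2)⁴ · h³ Σ_{i,j,k=1}^{m} |(φ_{i+1,j,k} − 2φ_{i,j,k} + φ_{i−1,j,k})/h²|², where the indices i±1 are taken modulo m. -/

import Mathlib

/-!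
Each summand of `φ` is a product `E_r(i) E_s(j) E_t(k)` of discrete Fourier modes
`E_r(i) = exp (2π i r (i - 1/2) / m)`. For `|r|, |r'| ≤ R` we have `|r - r'| < m`, so the modes
are orthogonal on the grid `{1,…,m}³` with squared norm `m³`, and the second difference in `i`
multiplies `E_r` by `-4 sin² (π r / m)`. Discrete Parseval turns the right-hand side into
`π⁴ m⁴ / L · Σ sin⁴ (π r / m) |c_{r,s,t}|²`, the left-hand side is
`π⁴ / L · Σ (2 r)⁴ |c_{r,s,t}|²`, and Jordan's inequality `sin x ≥ 2x/π` on `[0, π/2]`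
(applicable as `2|r| < m`) compares them term by term.
-/

open Finset Real

noncomputable def xg (h : ℝ) (i : ℤ) : ℝ := ((i : ℝ) - 1 / 2) * h

/-- The complex grid function determined by Fourier coefficients `c` on `{-R,…,R}³`:
`φ_{i,j,k} = Σ_{r,s,t=-R}^{R} c_{r,s,t} e^{2πi(r x_i + s y_j + t z_k)/L}`
(as a function of the integer indices, it is automatically `m`-periodic, `m = 2R+1`). -/
noncomputable def fgrid (L h : ℝ) (R : ℕ) (c : ℤ × ℤ × ℤ → ℂ) (i j k : ℤ) : ℂ :=
  ∑ r ∈ Finset.Icc (-(R : ℤ)) (R : ℤ), ∑ s ∈ Finset.Icc (-(R : ℤ)) (R : ℤ),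
    ∑ t ∈ Finset.Icc (-(R : ℤ)) (R : ℤ),
      c (r, s, t) *
        Complex.exp (2 * (Real.pi : ℂ) * Complex.I *
          ((r * xg h i + s * xg h j + t * xg h k : ℝ) : ℂ) / (L : ℂ))

open ComplexConjugate

-- For `h = L / m` this is `exp (2π i r x_i / L)`: the length `L` cancels.
noncomputable def gridExp (m : ℕ) (r i : ℤ) : ℂ :=
  Complex.exp (2 * π * Complex.I * r * (i - 1 / 2) / m)

lemma gridExp_zero_left (m : ℕ) (i : ℤ) : gridExp m 0 i = 1 := by
  simp [gridExp]

lemma gridExp_mul_conj (m : ℕ) (r r' i : ℤ) :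
    gridExp m r i * conj (gridExp m r' i) = gridExp m (r - r') i := by
  rw [gridExp, gridExp, gridExp, ← Complex.exp_conj, ← Complex.exp_add]
  congr 1
  simp only [map_div₀, map_mul, map_sub, map_ofNat, Complex.conj_ofReal, Complex.conj_I,
    map_intCast, map_natCast, map_one]
  push_cast
  ring

lemma gridExp_add (m : ℕ) (r i e : ℤ) :
    gridExp m r (i + e) = gridExp m r i * Complex.exp (2 * π * Complex.I * r * e / m) := by
  rw [gridExp, gridExp, ← Complex.exp_add]
  congr 1
  push_cast
  ring

lemma sum_gridExp_eq_zero {m : ℕ} {d : ℤ} (hd : ¬ (m : ℤ) ∣ d) :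
    ∑ i ∈ Icc (1 : ℤ) m, gridExp m d i = 0 := by
  rcases eq_or_ne m 0 with rfl | hm
  · simp
  have hζ := Complex.isPrimitiveRoot_exp m hm
  set ω := Complex.exp (2 * π * Complex.I / m) ^ d with hω_def
  have hω : ω ≠ 1 := fun h ↦ hd ((hζ.zpow_eq_one_iff_dvd d).mp h)
  have hωm : ω ^ m = 1 := by
    rw [← zpow_natCast, ← zpow_mul, mul_comm d, zpow_mul, zpow_natCast, hζ.pow_eq_one,
      one_zpow]
  have hterm : ∀ j : ℕ, gridExp m d (1 + j) = gridExp m d 1 * ω ^ j := by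
    intro j
    rw [gridExp_add, hω_def, ← Complex.exp_int_mul, ← Complex.exp_nat_mul]
    congr 2
    push_cast
    ring
  rw [Int.Icc_eq_finset_map, sum_map]
  simp only [add_sub_cancel_right, Int.toNat_natCast,
    Function.Embedding.trans_apply, Nat.castEmbedding_apply, addLeftEmbedding_apply, hterm,
    ← mul_sum, geom_sum_eq hω, hωm, sub_self, zero_div, mul_zero]

lemma sum_gridExp_mul_conj {m : ℕ} {r r' : ℤ} (hrr' : (r - r').natAbs < m) :
    ∑ i ∈ Icc (1 : ℤ) m, gridExp m r i * conj (gridExp m r' i)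
      = if r = r' then (m : ℂ) else 0 := by
  simp only [gridExp_mul_conj]
  split_ifs with h
  · simp [h, gridExp_zero_left]
  · refine sum_gridExp_eq_zero fun hdvd ↦ ?_
    have := Nat.le_of_dvd (Int.natAbs_pos.mpr (sub_ne_zero.mpr h)) (Int.ofNat_dvd_left.mp hdvd)
    omega

def IsOrthogonalFamily {ι κ : Type*} [DecidableEq ι] (A : Finset ι) (B : Finset κ)
    (f : ι → κ → ℂ) (N : ℝ) : Prop :=
  ∀ p ∈ A, ∀ p' ∈ A, ∑ q ∈ B, f p q * conj (f p' q) = if p = p' then (N : ℂ) else 0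

namespace IsOrthogonalFamily

variable {ι κ ι' κ' : Type*} [DecidableEq ι] [DecidableEq ι'] {A : Finset ι} {B : Finset κ}
  {f : ι → κ → ℂ} {N : ℝ}

lemma prod {A' : Finset ι'} {B' : Finset κ'} {g : ι' → κ' → ℂ} {N' : ℝ}
    (hf : IsOrthogonalFamily A B f N) (hg : IsOrthogonalFamily A' B' g N') :
    IsOrthogonalFamily (A ×ˢ A') (B ×ˢ B') (fun p q ↦ f p.1 q.1 * g p.2 q.2) (N * N') := by
  rintro ⟨p, p'⟩ hp ⟨r, r'⟩ hr
  rw [mem_product] at hp hr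
  calc ∑ q ∈ B ×ˢ B', f p q.1 * g p' q.2 * conj (f r q.1 * g r' q.2)
      = (∑ q ∈ B, f p q * conj (f r q)) * ∑ q' ∈ B', g p' q' * conj (g r' q') := by
        rw [sum_product, sum_mul_sum]
        refine sum_congr rfl fun q _ ↦ sum_congr rfl fun q' _ ↦ ?_
        rw [map_mul]
        ring
    _ = _ := by
        rw [hf p hp.1 r hr.1, hg p' hp.2 r' hr.2]
        split_ifs <;> simp_all

lemma sum_norm_sq (hf : IsOrthogonalFamily A B f N) (a : ι → ℂ) :
    ∑ q ∈ B, ‖∑ p ∈ A, a p * f p q‖ ^ 2 = N * ∑ p ∈ A, ‖a p‖ ^ 2 := by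
  apply Complex.ofReal_injective
  push_cast
  simp only [← Complex.mul_conj', map_sum, map_mul, sum_mul_sum]
  rw [mul_sum, sum_comm]
  refine sum_congr rfl fun p hp ↦ ?_
  rw [sum_comm]
  calc ∑ p' ∈ A, ∑ q ∈ B, a p * f p q * (conj (a p') * conj (f p' q))
      = ∑ p' ∈ A, a p * conj (a p') * ∑ q ∈ B, f p q * conj (f p' q) := by
        simp only [mul_sum]
        refine sum_congr rfl fun p' _ ↦ sum_congr rfl fun q _ ↦ by ring
    _ = _ := by
        rw [sum_congr rfl fun p' hp' ↦ by rw [hf p hp p' hp']]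
        simp only [mul_ite, mul_zero, sum_ite_eq, if_pos hp]
        ring

end IsOrthogonalFamily

lemma isOrthogonalFamily_gridExp {R m : ℕ} (hm : 2 * R < m) :
    IsOrthogonalFamily (Icc (-(R : ℤ)) R) (Icc (1 : ℤ) m) (gridExp m) m := by
  intro r hr r' hr'
  rw [mem_Icc] at hr hr'
  exact sum_gridExp_mul_conj (by omega)

noncomputable def gridExp3 (m : ℕ) (p q : ℤ × ℤ × ℤ) : ℂ :=
  gridExp m p.1 q.1 * gridExp m p.2.1 q.2.1 * gridExp m p.2.2 q.2.2

lemma isOrthogonalFamily_gridExp3 {R m : ℕ} (hm : 2 * R < m) :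
    IsOrthogonalFamily (Icc (-(R : ℤ)) R ×ˢ Icc (-(R : ℤ)) R ×ˢ Icc (-(R : ℤ)) R)
      (Icc (1 : ℤ) m ×ˢ Icc (1 : ℤ) m ×ˢ Icc (1 : ℤ) m) (gridExp3 m) ((m : ℝ) ^ 3) := by
  have h1 := isOrthogonalFamily_gridExp hm
  convert h1.prod (h1.prod h1) using 1
  · funext p q
    exact mul_assoc _ _ _
  · ring

lemma exp_two_mul_mul_I_sub_two_add_exp_neg (y : ℂ) :
    Complex.exp (2 * y * Complex.I) - 2 + Complex.exp (-(2 * y) * Complex.I)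
      = -4 * Complex.sin y ^ 2 := by
  linear_combination (-1 : ℂ) * Complex.two_cos (2 * y) + 2 * Complex.cos_two_mul' y
    + 2 * Complex.sin_sq_add_cos_sq y

lemma gridExp_secondDiff (m : ℕ) (r i : ℤ) :
    gridExp m r (i + 1) - 2 * gridExp m r i + gridExp m r (i - 1)
      = -((4 * Real.sin (π * r / m) ^ 2 : ℝ) : ℂ) * gridExp m r i := by
  set y : ℂ := π * r / m
  have hplus : 2 * π * Complex.I * r * ((1 : ℤ) : ℂ) / m = 2 * y * Complex.I := by
    push_cast; ring
  have hminus : 2 * π * Complex.I * r * ((-1 : ℤ) : ℂ) / m = -(2 * y) * Complex.I := by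
    push_cast; ring
  have heig : ((4 * Real.sin (π * r / m) ^ 2 : ℝ) : ℂ) = 4 * Complex.sin y ^ 2 := by
    push_cast; rfl
  rw [sub_eq_add_neg i, gridExp_add, gridExp_add, hplus, hminus, heig]
  linear_combination gridExp m r i * exp_two_mul_mul_I_sub_two_add_exp_neg (π * r / m)

section fgrid

variable {L h : ℝ} {m : ℕ} (R : ℕ) (c : ℤ × ℤ × ℤ → ℂ)

lemma fgrid_eq_sum_gridExp3 (hL : L ≠ 0) (hh : h = L / m) (i j k : ℤ) :
    fgrid L h R c i j k
      = ∑ p ∈ Icc (-(R : ℤ)) R ×ˢ Icc (-(R : ℤ)) R ×ˢ Icc (-(R : ℤ)) R,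
          c p * gridExp3 m p (i, j, k) := by
  have hL' : (L : ℂ) ≠ 0 := by exact_mod_cast hL
  simp only [fgrid, sum_product]
  refine sum_congr rfl fun r _ ↦ sum_congr rfl fun s _ ↦ sum_congr rfl fun t _ ↦ ?_
  rw [gridExp3, gridExp, gridExp, gridExp, ← Complex.exp_add, ← Complex.exp_add]
  congr 2
  simp only [xg, hh]
  push_cast
  field_simp

lemma fgrid_secondDiff (hL : L ≠ 0) (hh : h = L / m) (i j k : ℤ) :
    fgrid L h R c (i + 1) j k - 2 * fgrid L h R c i j k + fgrid L h R c (i - 1) j k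
      = ∑ p ∈ Icc (-(R : ℤ)) R ×ˢ Icc (-(R : ℤ)) R ×ˢ Icc (-(R : ℤ)) R,
          (-((4 * Real.sin (π * p.1 / m) ^ 2 : ℝ) : ℂ) * c p) * gridExp3 m p (i, j, k) := by
  simp only [fgrid_eq_sum_gridExp3 R c hL hh, mul_sum, ← sum_sub_distrib, ← sum_add_distrib]
  refine sum_congr rfl fun p _ ↦ ?_
  simp only [gridExp3]
  linear_combination
    (c p * gridExp m p.2.1 j * gridExp m p.2.2 k) * gridExp_secondDiff m p.1 i

lemma sum_norm_sq_fgrid_secondDiff (hL : L ≠ 0) (hh : h = L / m) (hm : 2 * R < m) :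
    ∑ i ∈ Icc (1 : ℤ) m, ∑ j ∈ Icc (1 : ℤ) m, ∑ k ∈ Icc (1 : ℤ) m,
        ‖fgrid L h R c (i + 1) j k - 2 * fgrid L h R c i j k + fgrid L h R c (i - 1) j k‖ ^ 2
      = m ^ 3 * ∑ r ∈ Icc (-(R : ℤ)) R, ∑ s ∈ Icc (-(R : ℤ)) R,
          ∑ t ∈ Icc (-(R : ℤ)) R,
            (4 * Real.sin (π * r / m) ^ 2) ^ 2 * ‖c (r, s, t)‖ ^ 2 := by
  calc _ = ∑ q ∈ Icc (1 : ℤ) m ×ˢ Icc (1 : ℤ) m ×ˢ Icc (1 : ℤ) m,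
        ‖∑ p ∈ Icc (-(R : ℤ)) R ×ˢ Icc (-(R : ℤ)) R ×ˢ Icc (-(R : ℤ)) R,
          (-((4 * Real.sin (π * p.1 / m) ^ 2 : ℝ) : ℂ) * c p) * gridExp3 m p q‖ ^ 2 := by
        simp only [sum_product (s := Icc (1 : ℤ) m), fgrid_secondDiff R c hL hh]
    _ = _ := (isOrthogonalFamily_gridExp3 hm).sum_norm_sq _
    _ = _ := by
        simp only [sum_product, norm_mul, norm_neg, Complex.norm_real, Real.norm_eq_abs, sq_abs,
          mul_pow]

end fgrid

lemma two_mul_pow_four_le_mul_sin_pow_four {r m : ℝ} (hm : 0 < m) (hr : 2 * |r| ≤ m) :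
    (2 * r) ^ 4 ≤ (m * Real.sin (π * r / m)) ^ 4 := by
  have hx : |π * r / m| ≤ π / 2 := by
    rw [abs_div, abs_mul, abs_of_pos pi_pos, abs_of_pos hm, div_le_iff₀ hm]
    nlinarith [pi_pos]
  have habs : |2 * r| ≤ |m * Real.sin (π * r / m)| :=
    calc |2 * r| = m * (2 / π * |π * r / m|) := by
          rw [abs_div, abs_mul, abs_mul, abs_of_pos pi_pos, abs_of_pos hm, abs_two]
          field_simp
      _ ≤ m * |Real.sin (π * r / m)| := by gcongr; exact mul_abs_le_abs_sin hx
      _ = |m * Real.sin (π * r / m)| := by rw [abs_mul, abs_of_pos hm]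
  simpa only [Even.pow_abs (by decide : Even 4)] using pow_le_pow_left₀ (abs_nonneg _) habs 4

/-- Second-derivative comparison between the continuous interpolant and the discrete
second difference. -/
theorem stmt14 (L : ℝ) (hL : 0 < L) (R : ℕ) (m : ℕ) (hm : m = 2 * R + 1)
    (h : ℝ) (hh : h = L / m) (c : ℤ × ℤ × ℤ → ℂ)
    (Φ : ℤ → ℤ → ℤ → ℂ) (hΦ : Φ = fgrid L h R c) :
    L ^ 3 * ∑ r ∈ Finset.Icc (-(R : ℤ)) (R : ℤ), ∑ s ∈ Finset.Icc (-(R : ℤ)) (R : ℤ),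
        ∑ t ∈ Finset.Icc (-(R : ℤ)) (R : ℤ),
          (2 * Real.pi * r / L) ^ 4 * ‖c (r, s, t)‖ ^ 2 ≤
      (Real.pi / 2) ^ 4 *
        (h ^ 3 * ∑ i ∈ Finset.Icc (1 : ℤ) (m : ℤ), ∑ j ∈ Finset.Icc (1 : ℤ) (m : ℤ),
          ∑ k ∈ Finset.Icc (1 : ℤ) (m : ℤ),
            ‖(Φ (i + 1) j k - 2 * Φ i j k + Φ (i - 1) j k) / (h : ℂ) ^ 2‖ ^ 2) := by
  subst hΦ
  have hm0 : (0 : ℝ) < m := by rw [hm]; positivity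
  have hnorm : ∀ z : ℂ, ‖z / (h : ℂ) ^ 2‖ ^ 2 = ‖z‖ ^ 2 / h ^ 4 := fun z ↦ by
    rw [norm_div, norm_pow, Complex.norm_real, Real.norm_eq_abs, div_pow, ← pow_mul,
      Even.pow_abs (by decide)]
  simp only [hnorm, ← sum_div]
  rw [sum_norm_sq_fgrid_secondDiff R c hL.ne' hh (by omega)]
  calc _ = π ^ 4 / L * ∑ r ∈ Icc (-(R : ℤ)) R, ∑ s ∈ Icc (-(R : ℤ)) R,
        ∑ t ∈ Icc (-(R : ℤ)) R, (2 * (r : ℝ)) ^ 4 * ‖c (r, s, t)‖ ^ 2 := by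
        simp only [mul_sum]
        refine sum_congr rfl fun r _ ↦ sum_congr rfl fun s _ ↦ sum_congr rfl fun t _ ↦ ?_
        field_simp
    _ ≤ π ^ 4 / L * ∑ r ∈ Icc (-(R : ℤ)) R, ∑ s ∈ Icc (-(R : ℤ)) R,
        ∑ t ∈ Icc (-(R : ℤ)) R, (m * Real.sin (π * r / m)) ^ 4 * ‖c (r, s, t)‖ ^ 2 := by
        gcongr π ^ 4 / L * ∑ r ∈ _, ∑ s ∈ _, ∑ t ∈ _, ?_ * _ with r hr s _ t _
        have hr' : 2 * |r| ≤ (m : ℤ) := by rw [mem_Icc] at hr; cases abs_cases r <;> omega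
        exact two_mul_pow_four_le_mul_sin_pow_four hm0 (by exact_mod_cast hr')
    _ = _ := by
        simp only [hh, mul_sum, sum_div]
        refine sum_congr rfl fun r _ ↦ sum_congr rfl fun s _ ↦ sum_congr rfl fun t _ ↦ ?_
        field_simp
        ring
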